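/- arXiv:2210.01376 — 3 statements merged into one kernel-verified Lean document; each statement's English description precedes it below -/
import Mathlib

section
/- Let η > 0, let ψ(p) = (1/η) Σ_{i=1}^K p_i ln p_i on the simplex Δ_K, let p ∈ Δ_K have all coordinates positive, let ℓ ∈ ℝ^K satisfy η ℓ_i ≥ −3 for all i ∈ [K], and let p' = argmin_{q ∈ Δ_K} { ⟨q, ℓ⟩ + D_ψ(q, p) }. Then for every u ∈ Δ_K, ⟨p − u, ℓ⟩ ≤ D_ψ(u, p) − D_ψ(u, p') + 2η Σ_{i=1}^K p_i ℓ_i². -/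
/-!
The entropic mirror step is an exponential-weights update. With `Z = ∑ i, p i * exp (-η * ℓ i)`
and `q i = p i * exp (-η * ℓ i) / Z`, every `r ∈ Δ_K` satisfies
`⟨r, ℓ⟩ + D_ψ(r, p) = D_ψ(r, q) - (log Z) / η`. So the minimiser is `p' = q` by Gibbs'
inequality, and the same identity at `r = u` gives `D_ψ(u, p) - D_ψ(u, p') = -⟨u, ℓ⟩ - (log Z) / η`.
The remaining bound `log Z ≤ Z - 1 ≤ -η ⟨p, ℓ⟩ + 2 η² ⟨p, ℓ²⟩` follows from
`exp (-x) ≤ 1 - x + 2 x²` for `x ≥ -3`.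
-/

open Real Finset InformationTheory

lemma exp_le_one_add_add_two_mul_sq {y : ℝ} (hy : y ≤ 3) : exp y ≤ 1 + y + 2 * y ^ 2 := by
  rcases le_total y 0 with hy0 | hy0
  -- for `y ≤ 0`, `exp y ≤ 1 / (1 - y)`; for `0 ≤ y ≤ 3`, cube the cubic Taylor bound at `y / 3`
  · have h : exp y * (1 - y) ≤ 1 :=
      calc exp y * (1 - y) ≤ exp y * exp (-y) := by gcongr; linarith [add_one_le_exp (-y)]
        _ = 1 := by rw [← exp_add, add_neg_cancel, exp_zero]
    nlinarith [exp_pos y]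
  · obtain ⟨t, rfl⟩ : ∃ t, y = 3 * t := ⟨y / 3, by ring⟩
    have ht0 : 0 ≤ t := by linarith
    have ht1 : t ≤ 1 := by linarith
    have htaylor : exp t ≤ 1 + t * (1 + t / 2 + 2 * t ^ 2 / 9) := by
      have h := exp_bound' ht0 ht1 (n := 3) (by norm_num)
      norm_num [sum_range_succ, Nat.factorial] at h
      linarith
    have hb0 : 0 ≤ 1 + t / 2 + 2 * t ^ 2 / 9 := by positivity
    have hb : 1 + t / 2 + 2 * t ^ 2 / 9 ≤ 31 / 18 := by nlinarith
    set b := 1 + t / 2 + 2 * t ^ 2 / 9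
    have hpoly : 3 / 2 + 2 / 3 * t + 3 * b ^ 2 + t * b ^ 3 ≤ 18 := by
      nlinarith [pow_le_pow_left₀ hb0 hb 3, pow_le_pow_left₀ hb0 hb 2]
    calc exp (3 * t) = exp t ^ 3 := by rw [← exp_nat_mul]; push_cast; ring_nf
      _ ≤ (1 + t * b) ^ 3 := by gcongr
      _ = 1 + 3 * t + t ^ 2 * (3 / 2 + 2 / 3 * t + 3 * b ^ 2 + t * b ^ 3) := by ring
      _ ≤ 1 + 3 * t + t ^ 2 * 18 := by gcongr
      _ = 1 + 3 * t + 2 * (3 * t) ^ 2 := by ring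

variable {ι : Type*} [Fintype ι]

/-- The Bregman divergence of `x ↦ ∑ i, x i * log (x i)`; thus `D_ψ = genKLDiv / η`. -/
noncomputable def genKLDiv (x y : ι → ℝ) : ℝ := ∑ i, (x i * log (x i / y i) + y i - x i)

lemma mul_log_div_add_sub_eq_mul_klFun (x : ℝ) {y : ℝ} (hy : y ≠ 0) :
    x * log (x / y) + y - x = y * klFun (x / y) := by
  rw [klFun_apply]; field_simp

lemma genKLDiv_eq_sum_mul_klFun (x : ι → ℝ) {y : ι → ℝ} (hy : ∀ i, y i ≠ 0) :
    genKLDiv x y = ∑ i, y i * klFun (x i / y i) :=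
  sum_congr rfl fun i _ ↦ mul_log_div_add_sub_eq_mul_klFun (x i) (hy i)

@[simp] lemma genKLDiv_self (x : ι → ℝ) : genKLDiv x x = 0 := by
  refine sum_eq_zero fun i _ ↦ ?_
  rcases eq_or_ne (x i) 0 with h | h <;> simp [h]

lemma eq_of_genKLDiv_nonpos {x y : ι → ℝ} (hx : ∀ i, 0 ≤ x i) (hy : ∀ i, 0 < y i)
    (h : genKLDiv x y ≤ 0) : x = y := by
  have hterm : ∀ i ∈ univ, 0 ≤ y i * klFun (x i / y i) :=
    fun i _ ↦ mul_nonneg (hy i).le (klFun_nonneg (div_nonneg (hx i) (hy i).le))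
  rw [genKLDiv_eq_sum_mul_klFun x fun i ↦ (hy i).ne'] at h
  have hzero := (sum_eq_zero_iff_of_nonneg hterm).1 (le_antisymm h (sum_nonneg hterm))
  funext i
  have hkl : klFun (x i / y i) = 0 :=
    (mul_eq_zero.1 (hzero i (mem_univ i))).resolve_left (hy i).ne'
  rw [klFun_eq_zero_iff (div_nonneg (hx i) (hy i).le), div_eq_one_iff_eq (hy i).ne'] at hkl
  exact hkl

lemma mul_log_div_sub_mul_log_div (x : ℝ) {y z : ℝ} (hy : 0 < y) (hz : 0 < z) :
    x * log (x / y) - x * log (x / z) = x * log (z / y) := by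
  rcases eq_or_ne x 0 with rfl | hx
  · simp
  rw [← mul_sub, ← log_div (div_ne_zero hx hy.ne') (div_ne_zero hx hz.ne')]
  congr 2
  field_simp

lemma genKLDiv_sub_genKLDiv (x : ι → ℝ) {y z : ι → ℝ} (hy : ∀ i, 0 < y i) (hz : ∀ i, 0 < z i) :
    genKLDiv x y - genKLDiv x z = ∑ i, x i * log (z i / y i) + ∑ i, y i - ∑ i, z i := by
  simp only [genKLDiv, ← sum_sub_distrib, ← sum_add_distrib]
  refine sum_congr rfl fun i _ ↦ ?_
  linear_combination mul_log_div_sub_mul_log_div (x i) (hy i) (hz i)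

noncomputable def expTilt (p f : ι → ℝ) (i : ι) : ℝ :=
  p i * exp (-f i) / ∑ j, p j * exp (-f j)

section ExpTilt

variable {p : ι → ℝ} (f : ι → ℝ)

lemma sum_mul_exp_neg_pos (hp : ∀ i, 0 ≤ p i) (hpsum : ∑ i, p i = 1) :
    0 < ∑ i, p i * exp (-f i) := by
  obtain ⟨i, -, hi⟩ := exists_ne_zero_of_sum_ne_zero (hpsum.trans_ne one_ne_zero)
  exact sum_pos' (fun j _ ↦ by have := hp j; positivity)
    ⟨i, mem_univ i, mul_pos ((hp i).lt_of_ne' hi) (exp_pos _)⟩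

lemma expTilt_pos (hp : ∀ i, 0 < p i) (hpsum : ∑ i, p i = 1) (i : ι) : 0 < expTilt p f i :=
  div_pos (mul_pos (hp i) (exp_pos _)) (sum_mul_exp_neg_pos f (fun j ↦ (hp j).le) hpsum)

lemma sum_expTilt (hp : ∀ i, 0 ≤ p i) (hpsum : ∑ i, p i = 1) : ∑ i, expTilt p f i = 1 := by
  simp only [expTilt, ← sum_div]
  exact div_self (sum_mul_exp_neg_pos f hp hpsum).ne'

lemma log_expTilt_div (hp : ∀ i, 0 < p i) (hpsum : ∑ i, p i = 1) (i : ι) :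
    log (expTilt p f i / p i) = -f i - log (∑ j, p j * exp (-f j)) := by
  have hZ := sum_mul_exp_neg_pos f (fun j ↦ (hp j).le) hpsum
  have h : expTilt p f i / p i = exp (-f i) / ∑ j, p j * exp (-f j) := by
    rw [expTilt]; field_simp [(hp i).ne']
  rw [h, log_div (exp_pos _).ne' hZ.ne', log_exp]

lemma genKLDiv_eq_genKLDiv_expTilt_sub (hp : ∀ i, 0 < p i) (hpsum : ∑ i, p i = 1)
    {r : ι → ℝ} (hrsum : ∑ i, r i = 1) :
    genKLDiv r p = genKLDiv r (expTilt p f) - ∑ i, r i * f i - log (∑ j, p j * exp (-f j)) := by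
  have h := genKLDiv_sub_genKLDiv r hp (expTilt_pos f hp hpsum)
  rw [sum_expTilt f (fun i ↦ (hp i).le) hpsum, hpsum] at h
  simp only [log_expTilt_div f hp hpsum, mul_sub, mul_neg, sum_sub_distrib, sum_neg_distrib,
    ← sum_mul, hrsum] at h
  linarith

end ExpTilt

lemma log_sum_mul_exp_neg_le {p f : ι → ℝ} (hp : ∀ i, 0 ≤ p i) (hpsum : ∑ i, p i = 1)
    (hf : ∀ i, -3 ≤ f i) :
    log (∑ i, p i * exp (-f i)) ≤ -∑ i, p i * f i + 2 * ∑ i, p i * f i ^ 2 :=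
  calc log (∑ i, p i * exp (-f i)) ≤ ∑ i, p i * exp (-f i) - 1 :=
        log_le_sub_one_of_pos (sum_mul_exp_neg_pos f hp hpsum)
    _ ≤ ∑ i, p i * (1 - f i + 2 * f i ^ 2) - 1 := by
        gcongr with i
        · exact hp i
        have h := exp_le_one_add_add_two_mul_sq (y := -f i) (by linarith [hf i])
        rwa [neg_sq, ← sub_eq_add_neg] at h
    _ = -∑ i, p i * f i + 2 * ∑ i, p i * f i ^ 2 := by
        simp only [mul_add, mul_sub, sum_add_distrib, sum_sub_distrib, mul_one, hpsum,
          mul_left_comm _ (2 : ℝ), ← mul_sum]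
        ring

/-- OMD step lemma with the entropy regularizer `ψ(p) = (1/η) Σ_i p_i ln p_i`, whose
Bregman divergence is `D_ψ(x,y) = (1/η) Σ_i (x_i ln(x_i/y_i) + y_i − x_i)`.
If `p ∈ Δ_K` has positive coordinates, `η ℓ_i ≥ −3` for all `i`, and
`p' = argmin_{q ∈ Δ_K} { ⟨q, ℓ⟩ + D_ψ(q, p) }`, then for every `u ∈ Δ_K`,
`⟨p − u, ℓ⟩ ≤ D_ψ(u, p) − D_ψ(u, p') + 2η Σ_i p_i ℓ_i²`. -/
theorem stmt_7 (K : ℕ) (η : ℝ) (hη : 0 < η) (p ℓ : Fin K → ℝ)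
    (hp : ∀ i, 0 < p i) (hpsum : ∑ i, p i = 1)
    (hℓ : ∀ i, -3 ≤ η * ℓ i)
    (Dψ : (Fin K → ℝ) → (Fin K → ℝ) → ℝ)
    (hD : ∀ x y, Dψ x y = (1 / η) * ∑ i, (x i * Real.log (x i / y i) + y i - x i))
    (p' : Fin K → ℝ) (hp'nn : ∀ i, 0 ≤ p' i) (hp'sum : ∑ i, p' i = 1)
    (hmin : ∀ q : Fin K → ℝ, (∀ i, 0 ≤ q i) → (∑ i, q i = 1) →
      (∑ i, p' i * ℓ i) + Dψ p' p ≤ (∑ i, q i * ℓ i) + Dψ q p) :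
    ∀ u : Fin K → ℝ, (∀ i, 0 ≤ u i) → (∑ i, u i = 1) →
      (∑ i, (p i - u i) * ℓ i) ≤ Dψ u p - Dψ u p' + 2 * η * ∑ i, p i * ℓ i ^ 2 := by
  intro u _ husum
  set f : Fin K → ℝ := fun i ↦ η * ℓ i
  set q := expTilt p f
  set Z := ∑ j, p j * exp (-f j)
  have hq : ∀ i, 0 < q i := expTilt_pos f hp hpsum
  have hqsum : ∑ i, q i = 1 := sum_expTilt f (fun i ↦ (hp i).le) hpsum
  have hDp : ∀ r : Fin K → ℝ, ∑ i, r i = 1 →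
      Dψ r p = (1 / η) * genKLDiv r q - ∑ i, r i * ℓ i - log Z / η := by
    intro r hr
    have hrf : ∑ i, r i * f i = η * ∑ i, r i * ℓ i := by
      rw [mul_sum]; exact sum_congr rfl fun i _ ↦ mul_left_comm _ _ _
    have h : genKLDiv r p = genKLDiv r q - η * ∑ i, r i * ℓ i - log Z := by
      rw [← hrf]; exact genKLDiv_eq_genKLDiv_expTilt_sub f hp hpsum hr
    rw [hD, ← genKLDiv, h]
    field_simp
  have hp'q : p' = q := by
    refine eq_of_genKLDiv_nonpos hp'nn hq ?_
    have h := hmin q (fun i ↦ (hq i).le) hqsum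
    rw [hDp p' hp'sum, hDp q hqsum, genKLDiv_self] at h
    exact nonpos_of_mul_nonpos_right (by linarith) (one_div_pos.2 hη)
  have hlogZ : log Z / η ≤ -∑ i, p i * ℓ i + 2 * η * ∑ i, p i * ℓ i ^ 2 := by
    rw [div_le_iff₀ hη]
    refine (log_sum_mul_exp_neg_le (fun i ↦ (hp i).le) hpsum hℓ).trans_eq ?_
    simp only [add_mul, neg_mul, mul_sum, sum_mul, ← sum_neg_distrib, ← sum_add_distrib]
    exact sum_congr rfl fun i _ ↦ by ring
  rw [hDp u husum, hp'q, hD, ← genKLDiv]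
  simp only [sub_mul, sum_sub_distrib]
  linarith
end

section
/- Let G = ([K], E) be a directed graph, let p be a probability vector on [K], let γ > 0, and let ℓ ∈ [0,1]^K. Fix a node i with W_i = Σ_{j∈N^in(i)} p_j > 0, let I be a random index with law p, and let ℓ̂_i = ℓ_i · 1{I ∈ N^in(i)} / (W_i + γ). Then E[ exp( 2γ ℓ̂_i ) ] ≤ exp( 2γ ℓ_i ). -/
/-!
Only the event `I ∈ N^in(i)` moves the estimator, so the expectation is `W e^a + (1 - W)` with
`a = 2γℓ_i / (W + γ)`. As `ℓ_i ≤ 1`, `a ≤ t := 2c / (W + c)` for `c = γℓ_i`, and the Padé bound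
`e^t ≤ (2 + t) / (2 - t) = 1 + 2c / W` gives `W e^a ≤ W + 2c`. Hence the expectation is at most
`1 + 2γℓ_i ≤ e^{2γℓ_i}`.
-/

open Finset Real

lemma sum_mul_ite_mem {ι : Type*} [Fintype ι] [DecidableEq ι] (s : Finset ι) (p : ι → ℝ)
    (a b : ℝ) :
    ∑ k, p k * (if k ∈ s then a else b) =
      (∑ k ∈ s, p k) * a + (∑ k, p k - ∑ k ∈ s, p k) * b := by
  rw [← sum_add_sum_compl s, ← sum_add_sum_compl s p, add_sub_cancel_left, sum_mul, sum_mul]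
  congr 1 <;> refine sum_congr rfl fun k hk => ?_
  · rw [if_pos hk]
  · rw [if_neg (mem_compl.mp hk)]

lemma mul_exp_two_mul_div_add_le {W c : ℝ} (hW : 0 < W) (hc : 0 ≤ c) :
    W * exp (2 * c / (W + c)) ≤ W + 2 * c := by
  have hWc : 0 < W + c := by linarith
  have hlt : 2 * c / (W + c) < 2 := by rw [div_lt_iff₀ hWc]; linarith
  have hpade := exp_le_two_add_div_two_sub (by positivity) hlt
  have hratio : (2 + 2 * c / (W + c)) / (2 - 2 * c / (W + c)) = (W + 2 * c) / W := by
    rw [div_eq_div_iff (sub_pos.2 hlt).ne' hW.ne']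
    field_simp
    ring
  calc W * exp (2 * c / (W + c)) ≤ W * ((W + 2 * c) / W) := by rw [← hratio]; gcongr
    _ = W + 2 * c := by field_simp

theorem stmt_13_general (K : ℕ) (Nin : Fin K → Finset (Fin K)) (p : Fin K → ℝ)
    (hpsum : ∑ i, p i = 1)
    (γ : ℝ) (hγ : 0 < γ)
    (ℓ : Fin K → ℝ) (hℓ : ∀ i, ℓ i ∈ Set.Icc (0 : ℝ) 1)
    (i : Fin K) (W : ℝ) (hW : W = ∑ j ∈ Nin i, p j) (hWpos : 0 < W)
    (ℓhat : Fin K → ℝ)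
    (hℓhat : ∀ k, ℓhat k = if k ∈ Nin i then ℓ i / (W + γ) else 0) :
    ∑ k, p k * Real.exp (2 * γ * ℓhat k) ≤ Real.exp (2 * γ * ℓ i) := by
  obtain ⟨hL0, hL1⟩ := hℓ i
  have hexp : ∀ k, exp (2 * γ * ℓhat k) =
      if k ∈ Nin i then exp (2 * γ * (ℓ i / (W + γ))) else 1 := by
    intro k
    rw [hℓhat k]
    split_ifs <;> simp
  have hsplit : ∑ k, p k * exp (2 * γ * ℓhat k) =
      W * exp (2 * γ * (ℓ i / (W + γ))) + (1 - W) := by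
    simp only [hexp, sum_mul_ite_mem, hpsum, ← hW, mul_one]
  have hexponent : 2 * γ * (ℓ i / (W + γ)) ≤ 2 * (γ * ℓ i) / (W + γ * ℓ i) := by
    rw [← mul_assoc, mul_div_assoc]
    gcongr
    nlinarith
  calc ∑ k, p k * exp (2 * γ * ℓhat k)
      ≤ W * exp (2 * (γ * ℓ i) / (W + γ * ℓ i)) + (1 - W) := by
        rw [hsplit]; gcongr
    _ ≤ W + 2 * (γ * ℓ i) + (1 - W) := by
        gcongr; exact mul_exp_two_mul_div_add_le hWpos (by positivity)
    _ = 2 * γ * ℓ i + 1 := by ring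
    _ ≤ exp (2 * γ * ℓ i) := add_one_le_exp _

/-- Exponential-moment bound for the implicit-exploration estimator: for a fixed node `i`
with `W_i = Σ_{j∈N^in(i)} p_j > 0` and a random index `I ∼ p` (expectation written as the
explicit sum over the law `p`), `E[exp(2γ ℓ̂_i)] ≤ exp(2γ ℓ_i)` where
`ℓ̂_i = ℓ_i · 1{I ∈ N^in(i)}/(W_i + γ)`. -/
theorem stmt_13 (K : ℕ) (Nin : Fin K → Finset (Fin K)) (p : Fin K → ℝ)
    (hpnn : ∀ i, 0 ≤ p i) (hpsum : ∑ i, p i = 1)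
    (γ : ℝ) (hγ : 0 < γ)
    (ℓ : Fin K → ℝ) (hℓ : ∀ i, ℓ i ∈ Set.Icc (0 : ℝ) 1)
    (i : Fin K) (W : ℝ) (hW : W = ∑ j ∈ Nin i, p j) (hWpos : 0 < W)
    (ℓhat : Fin K → ℝ)
    (hℓhat : ∀ k, ℓhat k = if k ∈ Nin i then ℓ i / (W + γ) else 0) :
    ∑ k, p k * Real.exp (2 * γ * ℓhat k) ≤ Real.exp (2 * γ * ℓ i) :=
  stmt_13_general K Nin p hpsum γ hγ ℓ hℓ i W hW hWpos ℓhat hℓhat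
end

section
/- In the time-varying feedback-graph setting with implicit-exploration parameter γ > 0, for every δ ∈ (0,1), with probability at least 1 − δ, simultaneously for every arm i ∈ [K], Σ_{t=1}^T ( ℓ̂_{t,i} − ℓ_{t,i} ) · 1{i ∈ S_t} ≤ log(K/δ) / (2γ). -/
/-!
Fix an arm `i` and let `X_t = (ℓ̂_{t,i} - ℓ_{t,i}) 1{i ∈ S_t}`. Given `F_{t-1}`, the conditional
mean of `exp (2γ X_t)` is at most `1`: for `i ∈ S_t` it equals
`(W e^{2γℓ/(W+γ)} + 1 - W) e^{-2γℓ}`, and `e^{2γℓ/(W+γ)} ≤ 1 + 2γℓ/W` follows from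
`log (1 + z) ≥ 2z/(z+2)`. Hence `exp (2γ ∑_{t ≤ n} X_t)` has mean at most `1` for every `n`,
Markov's inequality bounds the probability that `∑_t X_t > log (K/δ)/(2γ)` by `δ/K`, and a union
bound over the `K` arms concludes.
-/

open MeasureTheory ProbabilityTheory Real Finset

section ImplicitExploration

variable {ι : Type*} [DecidableEq ι]

/-- The estimate `ℓ̂_{t,i}` for `N = N^in_t(i)`, `p = p_t`, `l = ℓ_{t,i}` and played arm `j`. -/
noncomputable def ixEstimate (N : Finset ι) (p : ι → ℝ) (γ l : ℝ) (j : ι) : ℝ :=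
  if j ∈ N then l / (∑ k ∈ N, p k + γ) else 0

theorem ixEstimate_le_inv {N : Finset ι} {p : ι → ℝ} {γ l : ℝ} (hp : ∀ k, 0 ≤ p k)
    (hγ : 0 < γ) (hl : l ≤ 1) (j : ι) : ixEstimate N p γ l j ≤ γ⁻¹ := by
  unfold ixEstimate
  split_ifs
  · rw [inv_eq_one_div]
    exact div_le_div₀ zero_le_one hl hγ (le_add_of_nonneg_left (sum_nonneg fun k _ => hp k))
  · positivity

theorem two_mul_ixEstimate_sub_mul_le_two {N : Finset ι} {p : ι → ℝ} {γ l : ℝ}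
    (hp : ∀ k, 0 ≤ p k) (hγ : 0 < γ) (hl0 : 0 ≤ l) (hl1 : l ≤ 1) (i j : ι) :
    2 * γ * ((ixEstimate N p γ l j - l) * if i ∈ N then 1 else 0) ≤ 2 := by
  have := ixEstimate_le_inv (N := N) hp hγ hl1 j
  split_ifs
  · rw [mul_one]
    nlinarith [mul_inv_cancel₀ hγ.ne']
  · simp

theorem measurable_ixEstimate [Fintype ι] {Ω : Type*} {m : MeasurableSpace Ω} {N : Ω → Finset ι}
    {p : Ω → ι → ℝ} {l : Ω → ℝ} (hN : ∀ k, MeasurableSet {ω | k ∈ N ω})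
    (hp : ∀ k, Measurable fun ω => p ω k) (hl : Measurable l) (γ : ℝ) (j : ι) :
    Measurable fun ω => ixEstimate (N ω) (p ω) γ (l ω) j := by
  have hW : Measurable fun ω => ∑ k ∈ N ω, p ω k := by
    have : (fun ω => ∑ k ∈ N ω, p ω k) = fun ω => ∑ k, if k ∈ N ω then p ω k else 0 := by
      ext ω; rw [sum_ite_mem, univ_inter]
    rw [this]
    exact Finset.measurable_sum _ fun k _ => (hp k).ite (hN k) measurable_const
  exact Measurable.ite (hN j) (hl.div (hW.add_const γ)) measurable_const

theorem mul_exp_div_add_one_sub_le_exp {w γ l : ℝ} (hw : 0 ≤ w) (hγ : 0 ≤ γ) (hl0 : 0 ≤ l)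
    (hl1 : l ≤ 1) : w * exp (2 * γ * l / (w + γ)) + (1 - w) ≤ exp (2 * γ * l) := by
  rcases hw.eq_or_lt with rfl | hw
  · simpa using one_le_exp (by positivity)
  set z := 2 * γ * l / w
  have hz : 0 ≤ z := by positivity
  have hexp : exp (2 * γ * l / (w + γ)) ≤ 1 + z := by
    rw [← exp_log (by positivity : 0 < 1 + z), exp_le_exp]
    refine le_trans ?_ (le_log_one_add_of_nonneg hz)
    have : 2 * z / (z + 2) = 2 * γ * l / (w + γ * l) := by
      simp only [z]; field_simp; ring
    rw [this]
    exact div_le_div_of_nonneg_left (by positivity) (by positivity) (by nlinarith)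
  calc w * exp (2 * γ * l / (w + γ)) + (1 - w) ≤ w * (1 + z) + (1 - w) := by gcongr
    _ = 2 * γ * l + 1 := by simp only [z]; field_simp; ring
    _ ≤ exp (2 * γ * l) := add_one_le_exp _

theorem sum_mul_exp_ixEstimate_le_one [Fintype ι] {N : Finset ι} {p : ι → ℝ} {γ l : ℝ}
    (hp : ∀ k, 0 ≤ p k) (hp1 : ∑ k, p k = 1) (hγ : 0 ≤ γ) (hl0 : 0 ≤ l) (hl1 : l ≤ 1) (i : ι) :
    ∑ j, p j * exp (2 * γ * ((ixEstimate N p γ l j - l) * if i ∈ N then 1 else 0)) ≤ 1 := by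
  split_ifs with hi
  swap
  · simp [hp1]
  set w := ∑ k ∈ N, p k
  have hsplit : ∑ j, p j * exp (2 * γ * ixEstimate N p γ l j)
      = w * exp (2 * γ * l / (w + γ)) + (1 - w) := by
    have : ∀ j, p j * exp (2 * γ * ixEstimate N p γ l j)
        = p j + if j ∈ N then p j * (exp (2 * γ * l / (w + γ)) - 1) else 0 := by
      intro j
      unfold ixEstimate
      split_ifs
      · rw [mul_div_assoc]
        ring
      · simp
    rw [sum_congr rfl fun j _ => this j, sum_add_distrib, sum_ite_mem, univ_inter, ← sum_mul, hp1]
    ring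
  calc ∑ j, p j * exp (2 * γ * ((ixEstimate N p γ l j - l) * 1))
      = (∑ j, p j * exp (2 * γ * ixEstimate N p γ l j)) * exp (-(2 * γ * l)) := by
        rw [sum_mul]
        refine sum_congr rfl fun j _ => ?_
        rw [mul_assoc (p j), ← exp_add]
        congr 2
        ring
    _ ≤ exp (2 * γ * l) * exp (-(2 * γ * l)) := by
        rw [hsplit]
        gcongr
        exact mul_exp_div_add_one_sub_le_exp (sum_nonneg fun k _ => hp k) hγ hl0 hl1
    _ = 1 := by rw [← exp_add, add_neg_cancel, exp_zero]

end ImplicitExploration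

section Probability

variable {Ω ι : Type*} {m mΩ : MeasurableSpace Ω} {μ : Measure Ω}

theorem measurable_apply_of_countable {β : Type*} [MeasurableSpace β] [MeasurableSpace ι]
    [Countable ι] [MeasurableSingletonClass ι] {f : Ω → ι → β}
    (hf : ∀ j, Measurable fun ω => f ω j) {I : Ω → ι} (hI : Measurable I) :
    Measurable fun ω => f ω (I ω) :=
  (measurable_from_prod_countable_left (f := fun q : Ω × ι => f q.1 q.2) hf).comp
    (measurable_id.prodMk hI)

theorem integral_mul_eq_of_condExp_eq (hm : m ≤ mΩ) [SigmaFinite (μ.trim hm)] {f g q : Ω → ℝ}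
    (hf : StronglyMeasurable[m] f) (hfg : Integrable (f * g) μ) (hg : Integrable g μ)
    (hq : μ[g | m] =ᵐ[μ] q) :
    Integrable (f * q) μ ∧ ∫ ω, f ω * g ω ∂μ = ∫ ω, f ω * q ω ∂μ := by
  have h : μ[f * g | m] =ᵐ[μ] f * q :=
    (condExp_mul_of_stronglyMeasurable_left hf hfg hg).trans (Filter.EventuallyEq.rfl.mul hq)
  exact ⟨integrable_condExp.congr h, (integral_condExp hm).symm.trans (integral_congr_ae h)⟩

variable [Fintype ι] [MeasurableSpace ι] [MeasurableSingletonClass ι]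

theorem integral_mul_exp_apply_le [IsFiniteMeasure μ] (hm : m ≤ mΩ) {I : Ω → ι}
    (hI : Measurable I) {p f : Ω → ι → ℝ} {C : ℝ}
    (hlaw : ∀ j, μ[fun ω => {ω' | I ω' = j}.indicator (fun _ => (1 : ℝ)) ω | m]
      =ᵐ[μ] fun ω => p ω j)
    (hf : ∀ j, Measurable[m] fun ω => f ω j) (hfC : ∀ ω j, f ω j ≤ C)
    (hmgf : ∀ ω, ∑ j, p ω j * exp (f ω j) ≤ 1)
    {Y : Ω → ℝ} (hY : Measurable[m] Y) (hY0 : ∀ ω, 0 ≤ Y ω) (hYi : Integrable Y μ) :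
    ∫ ω, Y ω * exp (f ω (I ω)) ∂μ ≤ ∫ ω, Y ω ∂μ := by
  set F : ι → Ω → ℝ := fun j ω => Y ω * exp (f ω j)
  set g : ι → Ω → ℝ := fun j => {ω | I ω = j}.indicator fun _ => 1
  have hF : ∀ j, StronglyMeasurable[m] (F j) :=
    fun j => (hY.mul (hf j).exp).stronglyMeasurable
  have hFi : ∀ j, Integrable (F j) μ := fun j =>
    hYi.mul_bdd ((hf j).exp.mono hm le_rfl).aestronglyMeasurable (c := exp C)
      (ae_of_all _ fun ω => by simpa [abs_of_pos (exp_pos _)] using hfC ω j)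
  have hgi : ∀ j, Integrable (g j) μ :=
    fun j => (integrable_const 1).indicator (hI (measurableSet_singleton j))
  have hFgi : ∀ j, Integrable (F j * g j) μ := fun j =>
    (hFi j).mul_bdd (hgi j).aestronglyMeasurable (c := 1)
      (ae_of_all _ fun ω => (norm_indicator_le_norm_self _ _).trans (by simp))
  have hstep := fun j => integral_mul_eq_of_condExp_eq hm (hF j) (hFgi j) (hgi j) (hlaw j)
  have hdecomp : ∀ ω, Y ω * exp (f ω (I ω)) = ∑ j, F j ω * g j ω := fun ω => by
    rw [sum_eq_single (I ω) (fun j _ hj => by simp [g, Ne.symm hj]) (by simp)]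
    simp [F, g]
  calc ∫ ω, Y ω * exp (f ω (I ω)) ∂μ = ∑ j, ∫ ω, F j ω * g j ω ∂μ := by
        simp_rw [hdecomp]
        exact integral_finsetSum _ fun j _ => hFgi j
    _ = ∑ j, ∫ ω, F j ω * p ω j ∂μ := sum_congr rfl fun j _ => (hstep j).2
    _ = ∫ ω, ∑ j, F j ω * p ω j ∂μ := (integral_finsetSum _ fun j _ => (hstep j).1).symm
    _ ≤ ∫ ω, Y ω ∂μ := by
        refine integral_mono (integrable_finsetSum _ fun j _ => (hstep j).1) hYi fun ω => ?_
        calc ∑ j, F j ω * p ω j = Y ω * ∑ j, p ω j * exp (f ω j) := by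
              simp only [F, mul_sum]
              exact sum_congr rfl fun j _ => by ring
          _ ≤ Y ω := mul_le_of_le_one_right (hY0 ω) (hmgf ω)

variable (ℱ : Filtration ℕ mΩ) {T : ℕ} {I : ℕ → Ω → ι} {p f : ℕ → Ω → ι → ℝ} {C : ℝ}

theorem measurable_sum_apply (hI : ∀ t, 1 ≤ t → t ≤ T → Measurable[ℱ t] (I t))
    (hf : ∀ t, 1 ≤ t → t ≤ T → ∀ j, Measurable[ℱ (t - 1)] fun ω => f t ω j)
    {n : ℕ} (hn : n ≤ T) : Measurable[ℱ n] fun ω => ∑ t ∈ Icc 1 n, f t ω (I t ω) := by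
  refine Finset.measurable_sum _ fun t ht => ?_
  obtain ⟨ht1, htn⟩ := mem_Icc.mp ht
  exact measurable_apply_of_countable
    (fun j => (hf t ht1 (htn.trans hn) j).mono (ℱ.mono (by omega)) le_rfl)
    ((hI t ht1 (htn.trans hn)).mono (ℱ.mono htn) le_rfl)

variable [IsProbabilityMeasure μ]

theorem integrable_exp_sum_apply_and_integral_le_one
    (hI : ∀ t, 1 ≤ t → t ≤ T → Measurable[ℱ t] (I t))
    (hlaw : ∀ t, 1 ≤ t → t ≤ T → ∀ j,
      μ[fun ω => {ω' | I t ω' = j}.indicator (fun _ => (1 : ℝ)) ω | ℱ (t - 1)]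
        =ᵐ[μ] fun ω => p t ω j)
    (hf : ∀ t, 1 ≤ t → t ≤ T → ∀ j, Measurable[ℱ (t - 1)] fun ω => f t ω j)
    (hfC : ∀ t ω j, f t ω j ≤ C) (hmgf : ∀ t ω, ∑ j, p t ω j * exp (f t ω j) ≤ 1) :
    ∀ n ≤ T, Integrable (fun ω => exp (∑ t ∈ Icc 1 n, f t ω (I t ω))) μ ∧
      ∫ ω, exp (∑ t ∈ Icc 1 n, f t ω (I t ω)) ∂μ ≤ 1
  | 0, _ => by simp
  | n + 1, hn => by
    obtain ⟨hint, hle⟩ := integrable_exp_sum_apply_and_integral_le_one hI hlaw hf hfC hmgf n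
      (by omega)
    have hsplit : ∀ ω, exp (∑ t ∈ Icc 1 (n + 1), f t ω (I t ω))
        = exp (∑ t ∈ Icc 1 n, f t ω (I t ω)) * exp (f (n + 1) ω (I (n + 1) ω)) := fun ω => by
      rw [sum_Icc_succ_top (by omega), exp_add]
    have hIn : Measurable (I (n + 1)) := (hI (n + 1) (by omega) hn).mono (ℱ.le _) le_rfl
    have hfn := hf (n + 1) (by omega) hn
    simp_rw [hsplit]
    refine ⟨hint.mul_bdd ?_ (c := exp C) ?_, ?_⟩
    · exact (measurable_apply_of_countable (fun j => (hfn j).mono (ℱ.le n) le_rfl)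
        hIn).exp.aestronglyMeasurable
    · exact ae_of_all _ fun ω => by simpa [abs_of_pos (exp_pos _)] using hfC _ ω _
    · refine le_trans ?_ hle
      exact integral_mul_exp_apply_le (ℱ.le n) hIn (hlaw (n + 1) (by omega) hn) hfn (hfC (n + 1))
        (hmgf (n + 1)) (measurable_sum_apply ℱ hI hf (by omega)).exp (fun ω => (exp_pos _).le) hint

theorem measure_le_sum_apply_le_exp_neg
    (hI : ∀ t, 1 ≤ t → t ≤ T → Measurable[ℱ t] (I t))
    (hlaw : ∀ t, 1 ≤ t → t ≤ T → ∀ j,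
      μ[fun ω => {ω' | I t ω' = j}.indicator (fun _ => (1 : ℝ)) ω | ℱ (t - 1)]
        =ᵐ[μ] fun ω => p t ω j)
    (hf : ∀ t, 1 ≤ t → t ≤ T → ∀ j, Measurable[ℱ (t - 1)] fun ω => f t ω j)
    (hfC : ∀ t ω j, f t ω j ≤ C) (hmgf : ∀ t ω, ∑ j, p t ω j * exp (f t ω j) ≤ 1) (a : ℝ) :
    μ {ω | a ≤ ∑ t ∈ Icc 1 T, f t ω (I t ω)} ≤ ENNReal.ofReal (exp (-a)) := by
  obtain ⟨hint, hle⟩ :=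
    integrable_exp_sum_apply_and_integral_le_one ℱ hI hlaw hf hfC hmgf T le_rfl
  rw [← ofReal_measureReal]
  refine ENNReal.ofReal_le_ofReal ?_
  calc μ.real {ω | a ≤ ∑ t ∈ Icc 1 T, f t ω (I t ω)}
      ≤ exp (-1 * a) * mgf (fun ω => ∑ t ∈ Icc 1 T, f t ω (I t ω)) μ 1 :=
        measure_ge_le_exp_mul_mgf a zero_le_one (by simpa using hint)
    _ ≤ exp (-a) * 1 := by
        rw [neg_one_mul]
        gcongr
        simpa [mgf] using hle
    _ = exp (-a) := mul_one _

end Probability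

theorem ofReal_one_sub_le_measure_forall {Ω ι : Type*} [Fintype ι] [MeasurableSpace Ω]
    {μ : Measure Ω} [IsProbabilityMeasure μ] {P : ι → Ω → Prop} {δ : ℝ} (hδ : 0 ≤ δ)
    (h : ∀ i, μ {ω | ¬ P i ω} ≤ ENNReal.ofReal (δ / Fintype.card ι)) :
    ENNReal.ofReal (1 - δ) ≤ μ {ω | ∀ i, P i ω} := by
  have hbad : μ {ω | ∃ i, ¬ P i ω} ≤ ENNReal.ofReal δ := by
    calc μ {ω | ∃ i, ¬ P i ω} = μ (⋃ i, {ω | ¬ P i ω}) := by congr 1; ext; simp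
      _ ≤ ∑ i, μ {ω | ¬ P i ω} := measure_iUnion_fintype_le μ _
      _ ≤ ∑ _i : ι, ENNReal.ofReal (δ / Fintype.card ι) := sum_le_sum fun i _ => h i
      _ = ENNReal.ofReal (Fintype.card ι * (δ / Fintype.card ι)) := by
        rw [sum_const, card_univ, nsmul_eq_mul, ENNReal.ofReal_mul (by positivity),
          ENNReal.ofReal_natCast]
      _ ≤ ENNReal.ofReal δ := by
        refine ENNReal.ofReal_le_ofReal ?_
        rcases (Fintype.card ι).eq_zero_or_pos with h0 | hpos
        · simp [h0, hδ]
        · rw [mul_div_cancel₀ _ (by positivity)]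
  have hcover : 1 ≤ μ {ω | ∀ i, P i ω} + μ {ω | ∃ i, ¬ P i ω} := by
    calc (1 : ENNReal) = μ ({ω | ∀ i, P i ω} ∪ {ω | ∃ i, ¬ P i ω}) := by
          rw [← measure_univ (μ := μ)]
          congr 1
          ext ω
          simpa using (em _).imp_right not_forall.mp
      _ ≤ _ := measure_union_le _ _
  rw [ENNReal.ofReal_sub _ hδ, ENNReal.ofReal_one, tsub_le_iff_right]
  exact hcover.trans (by gcongr)

theorem stmt_18_general
    (Ω : Type) (mΩ : MeasurableSpace Ω) (μ : Measure Ω)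
    (hμ : IsProbabilityMeasure μ)
    (ℱ : ℕ → MeasurableSpace Ω) (hℱle : ∀ t, ℱ t ≤ mΩ) (hℱmono : Monotone ℱ)
    (K T : ℕ) (hK : 2 ≤ K)
    (ℓ : ℕ → Ω → Fin K → ℝ)
    (hℓmem : ∀ t ω i, ℓ t ω i ∈ Set.Icc (0 : ℝ) 1)
    (hℓmeas : ∀ t, 1 ≤ t → t ≤ T → ∀ i, Measurable[ℱ (t - 1)] fun ω => ℓ t ω i)
    (Nin : ℕ → Ω → Fin K → Finset (Fin K))
    (hNmeas : ∀ t, 1 ≤ t → t ≤ T → ∀ i j, MeasurableSet[ℱ (t - 1)] {ω | j ∈ Nin t ω i})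
    (p : ℕ → Ω → Fin K → ℝ)
    (hpmeas : ∀ t, 1 ≤ t → t ≤ T → ∀ i, Measurable[ℱ (t - 1)] fun ω => p t ω i)
    (hppos : ∀ t ω i, 0 < p t ω i) (hpsum : ∀ t ω, ∑ i, p t ω i = 1)
    (I : ℕ → Ω → Fin K)
    (hImeas : ∀ t, 1 ≤ t → t ≤ T → Measurable[ℱ t] (I t))
    (hIlaw : ∀ t, 1 ≤ t → t ≤ T → ∀ i,
      (μ[fun ω => Set.indicator {ω' | I t ω' = i} (fun _ => (1 : ℝ)) ω | ℱ (t - 1)])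
        =ᵐ[μ] fun ω => p t ω i)
    (W : ℕ → Ω → Fin K → ℝ)
    (hW : ∀ t ω i, W t ω i = ∑ j ∈ Nin t ω i, p t ω j)
    (γ : ℝ) (hγ : 0 < γ)
    (ℓhat : ℕ → Ω → Fin K → ℝ)
    (hℓhat : ∀ t ω i, ℓhat t ω i =
      if I t ω ∈ Nin t ω i then ℓ t ω i / (W t ω i + γ) else 0)
    (δ : ℝ) (hδ0 : 0 < δ) :
    ENNReal.ofReal (1 - δ) ≤
      μ {ω | ∀ i : Fin K,
        (∑ t ∈ Finset.Icc 1 T,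
          (ℓhat t ω i - ℓ t ω i) * (if i ∈ Nin t ω i then (1 : ℝ) else 0)) ≤
          Real.log (K / δ) / (2 * γ)} := by
  let 𝓕 : Filtration ℕ mΩ := ⟨ℱ, hℱmono, hℱle⟩
  have hKδ : 0 < (K : ℝ) / δ := div_pos (by exact_mod_cast (by omega : 0 < K)) hδ0
  refine ofReal_one_sub_le_measure_forall hδ0.le fun i => ?_
  let f : ℕ → Ω → Fin K → ℝ := fun t ω j => 2 * γ *
    ((ixEstimate (Nin t ω i) (p t ω) γ (ℓ t ω i) j - ℓ t ω i) * if i ∈ Nin t ω i then 1 else 0)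
  have hfI : ∀ t ω, f t ω (I t ω)
      = 2 * γ * ((ℓhat t ω i - ℓ t ω i) * if i ∈ Nin t ω i then 1 else 0) := fun t ω => by
    simp only [f, ixEstimate, hℓhat, hW]
  have hf : ∀ t, 1 ≤ t → t ≤ T → ∀ j, Measurable[𝓕 (t - 1)] fun ω => f t ω j :=
    fun t h1 h2 j => measurable_const.mul <|
      ((measurable_ixEstimate (hNmeas t h1 h2 i) (hpmeas t h1 h2) (hℓmeas t h1 h2 i) γ j).sub
        (hℓmeas t h1 h2 i)).mul (measurable_const.ite (hNmeas t h1 h2 i i) measurable_const)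
  have hfC : ∀ t ω j, f t ω j ≤ 2 := fun t ω j =>
    two_mul_ixEstimate_sub_mul_le_two (fun k => (hppos t ω k).le) hγ (hℓmem t ω i).1
      (hℓmem t ω i).2 i j
  have hmgf : ∀ t ω, ∑ j, p t ω j * exp (f t ω j) ≤ 1 := fun t ω =>
    sum_mul_exp_ixEstimate_le_one (fun k => (hppos t ω k).le) (hpsum t ω) hγ.le
      (hℓmem t ω i).1 (hℓmem t ω i).2 i
  calc μ _ ≤ μ {ω | log (K / δ) ≤ ∑ t ∈ Icc 1 T, f t ω (I t ω)} := by
        refine measure_mono fun ω hω => ?_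
        simp only [Set.mem_ofPred_eq, not_le, hfI, ← mul_sum] at hω ⊢
        rw [div_lt_iff₀ (by positivity)] at hω
        linarith
    _ ≤ ENNReal.ofReal (exp (-log (K / δ))) :=
        measure_le_sum_apply_le_exp_neg 𝓕 hImeas hIlaw hf hfC hmgf _
    _ = ENNReal.ofReal (δ / Fintype.card (Fin K)) := by
        rw [exp_neg, exp_log hKδ, inv_div, Fintype.card_fin]

/-- Implicit-exploration concentration (Corollary 1 of Neu): in the time-varying
feedback-graph setting with implicit-exploration parameter `γ > 0`, with probability at
least `1 − δ`, simultaneously for every arm `i`,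
`Σ_{t=1}^T (ℓ̂_{t,i} − ℓ_{t,i}) · 1{i ∈ S_t} ≤ log(K/δ)/(2γ)`. -/
theorem stmt_18
    (Ω : Type) (mΩ : MeasurableSpace Ω) (μ : Measure Ω)
    (hμ : IsProbabilityMeasure μ)
    (ℱ : ℕ → MeasurableSpace Ω) (hℱle : ∀ t, ℱ t ≤ mΩ) (hℱmono : Monotone ℱ)
    (K T : ℕ) (hK : 2 ≤ K) (hT : 1 ≤ T)
    (ℓ : ℕ → Ω → Fin K → ℝ)
    (hℓmem : ∀ t ω i, ℓ t ω i ∈ Set.Icc (0 : ℝ) 1)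
    (hℓmeas : ∀ t, 1 ≤ t → t ≤ T → ∀ i, Measurable[ℱ (t - 1)] fun ω => ℓ t ω i)
    (Nin : ℕ → Ω → Fin K → Finset (Fin K))
    (hNmeas : ∀ t, 1 ≤ t → t ≤ T → ∀ i j, MeasurableSet[ℱ (t - 1)] {ω | j ∈ Nin t ω i})
    (p : ℕ → Ω → Fin K → ℝ)
    (hpmeas : ∀ t, 1 ≤ t → t ≤ T → ∀ i, Measurable[ℱ (t - 1)] fun ω => p t ω i)
    (hppos : ∀ t ω i, 0 < p t ω i) (hpsum : ∀ t ω, ∑ i, p t ω i = 1)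
    (I : ℕ → Ω → Fin K)
    (hImeas : ∀ t, 1 ≤ t → t ≤ T → Measurable[ℱ t] (I t))
    (hIlaw : ∀ t, 1 ≤ t → t ≤ T → ∀ i,
      (μ[fun ω => Set.indicator {ω' | I t ω' = i} (fun _ => (1 : ℝ)) ω | ℱ (t - 1)])
        =ᵐ[μ] fun ω => p t ω i)
    (W : ℕ → Ω → Fin K → ℝ)
    (hW : ∀ t ω i, W t ω i = ∑ j ∈ Nin t ω i, p t ω j)
    (γ : ℝ) (hγ : 0 < γ)
    (ℓhat : ℕ → Ω → Fin K → ℝ)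
    (hℓhat : ∀ t ω i, ℓhat t ω i =
      if I t ω ∈ Nin t ω i then ℓ t ω i / (W t ω i + γ) else 0)
    (δ : ℝ) (hδ0 : 0 < δ) (hδ1 : δ < 1) :
    ENNReal.ofReal (1 - δ) ≤
      μ {ω | ∀ i : Fin K,
        (∑ t ∈ Finset.Icc 1 T,
          (ℓhat t ω i - ℓ t ω i) * (if i ∈ Nin t ω i then (1 : ℝ) else 0)) ≤
          Real.log (K / δ) / (2 * γ)} :=
  stmt_18_general Ω mΩ μ hμ ℱ hℱle hℱmono K T hK ℓ hℓmem hℓmeas Nin hNmeas p hpmeas hppos hpsum I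
    hImeas hIlaw W hW γ hγ ℓhat hℓhat δ hδ0
end
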